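/- Let K ⊂ ℝ be a Kronecker set and let σ be a finite positive Borel measure on ℝ concentrated on K (i.e. σ(ℝ∖K) = 0). Then σ is a Kronecker measure: for every f ∈ L²(ℝ, σ) with |f| = 1 σ-a.e. there exists a sequence (t_n) of real numbers with t_n → ∞ such that ξ_{t_n} → f in L²(ℝ, σ). -/

import Mathlib

open MeasureTheory Filter Topology
open scoped ENNReal NNReal

/-- `ξ_s(x) = exp(2πisx)`. -/
noncomputable def xi (s x : ℝ) : ℂ := Complex.exp (2 * Real.pi * Complex.I * s * x)

/-- A Kronecker set: a compact set on which every unimodular continuous function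
is a uniform limit of characters `x ↦ exp(2πitx)`. -/
def IsKroneckerSet (K : Set ℝ) : Prop :=
  IsCompact K ∧ ∀ f : ℝ → ℂ, ContinuousOn f K → (∀ x ∈ K, ‖f x‖ = 1) →
    ∀ ε : ℝ, 0 < ε → ∃ t : ℝ, ∀ x ∈ K, ‖f x - xi t x‖ < ε

/-!
Frequencies of Kronecker approximants on `K` can be taken arbitrarily large. Approximating the
constant `-1` on `K` by `ξ_t` either forces `|t|` to be unbounded, and then `ξ_{2|t|} ≈ 1` on `K`,
or yields `ξ_L = -1` exactly on `K`, and then the `ξ_{2n|L|}` are identically `1` on `K`; shifting a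
Kronecker approximant by such an almost period `b` keeps it an approximant. As `σ` lives on `K`,
uniform approximation on `K` gives approximation in `L²(σ)`, and unimodular `f` are `L²`-limits of
continuous unimodular `exp (i θ)` with `θ` approximating `arg f`.
-/

open Complex ComplexConjugate

lemma xi_eq_exp (s x : ℝ) : xi s x = exp (↑(2 * Real.pi * s * x) * I) := by
  unfold xi; push_cast; ring_nf

lemma norm_xi (s x : ℝ) : ‖xi s x‖ = 1 := by
  rw [xi_eq_exp]; exact norm_exp_ofReal_mul_I _

lemma xi_zero (x : ℝ) : xi 0 x = 1 := by
  simp [xi]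

lemma xi_add (s t x : ℝ) : xi (s + t) x = xi s x * xi t x := by
  simp only [xi, ← exp_add]; push_cast; ring_nf

lemma xi_neg (s x : ℝ) : xi (-s) x = conj (xi s x) := by
  simp only [xi_eq_exp, ← exp_conj, map_mul, conj_ofReal, conj_I]; push_cast; ring_nf

lemma xi_natCast_mul (n : ℕ) (s x : ℝ) : xi (n * s) x = xi s x ^ n := by
  simp only [xi, ← exp_nat_mul]; push_cast; ring_nf

lemma continuous_xi (s : ℝ) : Continuous (xi s) := by
  unfold xi; fun_prop

lemma continuous_xi_apply (x : ℝ) : Continuous fun s => xi s x := by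
  unfold xi; fun_prop

lemma norm_xi_abs_add_one (t x : ℝ) : ‖xi |t| x + 1‖ = ‖xi t x + 1‖ := by
  rcases abs_choice t with h | h <;> rw [h]
  rw [xi_neg, ← norm_conj, map_add, conj_conj, map_one]

theorem IsKroneckerSet.eq_xi_or_exists_abs_gt {K : Set ℝ} (hK : IsKroneckerSet K) {g : ℝ → ℂ}
    (hgc : ContinuousOn g K) (hg1 : ∀ x ∈ K, ‖g x‖ = 1) :
    (∃ L, ∀ x ∈ K, g x = xi L x) ∨
      ∀ δ > 0, ∀ C, ∃ t, C < |t| ∧ ∀ x ∈ K, ‖g x - xi t x‖ < δ := by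
  refine or_iff_not_imp_right.2 fun h => ?_
  push Not at h
  obtain ⟨δ, hδ, C, hC⟩ := h
  choose t ht using fun k : ℕ => hK.2 g hgc hg1 (min δ (1 / (k + 1))) (by positivity)
  have ht_mem (k : ℕ) : t k ∈ Metric.closedBall 0 C := by
    rw [mem_closedBall_zero_iff, Real.norm_eq_abs]
    refine not_lt.1 fun hlt => ?_
    obtain ⟨x, hx, hle⟩ := hC (t k) hlt
    exact hle.not_gt ((ht k x hx).trans_le (min_le_left _ _))
  obtain ⟨L, -, φ, hφ, hlim⟩ := tendsto_subseq_of_bounded Metric.isBounded_closedBall ht_mem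
  refine ⟨L, fun x hx => ?_⟩
  have h_lim : Tendsto (fun k => g x - xi (t (φ k)) x) atTop (𝓝 (g x - xi L x)) :=
    tendsto_const_nhds.sub (((continuous_xi_apply x).tendsto L).comp hlim)
  have h_zero : Tendsto (fun k => g x - xi (t k) x) atTop (𝓝 0) := by
    rw [tendsto_zero_iff_norm_tendsto_zero]
    exact squeeze_zero (fun _ => norm_nonneg _)
      (fun k => ((ht k x hx).trans_le (min_le_right _ _)).le)
      tendsto_one_div_add_atTop_nhds_zero_nat
  exact sub_eq_zero.1 (tendsto_nhds_unique h_lim (h_zero.comp hφ.tendsto_atTop))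

theorem IsKroneckerSet.exists_ge_forall_norm_xi_sub_one_lt {K : Set ℝ} (hK : IsKroneckerSet K)
    {δ : ℝ} (hδ : 0 < δ) (M : ℝ) : ∃ b, M ≤ b ∧ ∀ x ∈ K, ‖xi b x - 1‖ < δ := by
  rcases K.eq_empty_or_nonempty with rfl | ⟨x₀, hx₀⟩
  · exact ⟨M, le_rfl, by simp⟩
  rcases hK.eq_xi_or_exists_abs_gt (g := fun _ => -1) continuousOn_const (by simp)
    with ⟨L, hL⟩ | h
  · have hL_abs (x : ℝ) (hx : x ∈ K) : xi |L| x = -1 := by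
      rw [← add_eq_zero_iff_eq_neg, ← norm_eq_zero, norm_xi_abs_add_one, ← hL x hx]
      simp
    have hL_pos : 0 < |L| := abs_pos.2 fun h => by
      have h₀ := hL x₀ hx₀
      rw [h, xi_zero] at h₀
      norm_num at h₀
    obtain ⟨n, hn⟩ := exists_nat_ge (M / (2 * |L|))
    refine ⟨(2 * n : ℕ) * |L|, ?_, fun x hx => ?_⟩
    · rw [div_le_iff₀ (by positivity)] at hn
      push_cast
      linarith
    · rw [xi_natCast_mul, hL_abs x hx, pow_mul]
      simp [hδ]
  · obtain ⟨t, ht, hclose⟩ := h (δ / 2) (by positivity) (M / 2)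
    refine ⟨|t| + |t|, by linarith, fun x hx => ?_⟩
    have h_plus : ‖xi |t| x + 1‖ < δ / 2 :=
      calc ‖xi |t| x + 1‖ = ‖-1 - xi t x‖ := by
            rw [norm_xi_abs_add_one, ← norm_neg]; congr 1; ring
        _ < δ / 2 := hclose x hx
    have h_minus : ‖xi |t| x - 1‖ ≤ 2 :=
      calc ‖xi |t| x - 1‖ ≤ ‖xi |t| x‖ + ‖(1 : ℂ)‖ := norm_sub_le _ _
        _ = 2 := by rw [norm_xi, norm_one]; norm_num
    calc ‖xi (|t| + |t|) x - 1‖ = ‖xi |t| x - 1‖ * ‖xi |t| x + 1‖ := by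
          rw [xi_add, ← norm_mul]; ring_nf
      _ < 2 * (δ / 2) := mul_lt_mul' h_minus h_plus (norm_nonneg _) two_pos
      _ = δ := by ring

theorem IsKroneckerSet.exists_ge_forall_norm_sub_xi_lt {K : Set ℝ} (hK : IsKroneckerSet K)
    {g : ℝ → ℂ} (hgc : ContinuousOn g K) (hg1 : ∀ x ∈ K, ‖g x‖ = 1) {δ : ℝ} (hδ : 0 < δ)
    (M : ℝ) : ∃ t, M ≤ t ∧ ∀ x ∈ K, ‖g x - xi t x‖ < δ := by
  obtain ⟨t₀, ht₀⟩ := hK.2 g hgc hg1 (δ / 2) (half_pos hδ)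
  obtain ⟨b, hb, hbK⟩ := hK.exists_ge_forall_norm_xi_sub_one_lt (half_pos hδ) (M - t₀)
  refine ⟨t₀ + b, by linarith, fun x hx => ?_⟩
  calc ‖g x - xi (t₀ + b) x‖ ≤ ‖g x - xi t₀ x‖ + ‖xi t₀ x - xi (t₀ + b) x‖ :=
        norm_sub_le_norm_sub_add_norm_sub _ _ _
    _ = ‖g x - xi t₀ x‖ + ‖xi b x - 1‖ := by
        rw [xi_add, ← mul_one_sub, norm_mul, norm_xi, one_mul, norm_sub_rev 1]
    _ < δ / 2 + δ / 2 := add_lt_add (ht₀ x hx) (hbK x hx)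
    _ = δ := add_halves δ

lemma norm_exp_ofReal_mul_I_sub_exp_le (a b : ℝ) : ‖exp (a * I) - exp (b * I)‖ ≤ |a - b| := by
  have h : exp (a * I) - exp (b * I) = exp (b * I) * (exp (I * ↑(a - b)) - 1) := by
    rw [mul_sub, ← exp_add]; push_cast; ring_nf
  rw [h, norm_mul, norm_exp_ofReal_mul_I, one_mul, ← Real.norm_eq_abs]
  exact Real.norm_exp_I_mul_ofReal_sub_one_le

theorem exists_continuous_unimodular_eLpNorm_sub_le {α : Type*} [TopologicalSpace α]
    [NormalSpace α] [MeasurableSpace α] [BorelSpace α] {μ : Measure α} [IsFiniteMeasure μ]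
    [μ.WeaklyRegular] {p : ℝ≥0∞} (hp : p ≠ ∞) {f : α → ℂ} (hf : AEStronglyMeasurable f μ)
    (hf1 : ∀ᵐ x ∂μ, ‖f x‖ = 1) {ε : ℝ≥0∞} (hε : ε ≠ 0) :
    ∃ φ : α → ℂ, Continuous φ ∧ (∀ x, ‖φ x‖ = 1) ∧ eLpNorm (φ - f) p μ ≤ ε := by
  have h_arg : MemLp (fun x => arg (f x)) p μ :=
    .of_bound (measurable_arg.comp_aemeasurable hf.aemeasurable).aestronglyMeasurable Real.pi
      (.of_forall fun x => by simpa [Real.norm_eq_abs] using abs_arg_le_pi (f x))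
  obtain ⟨θ, hθ, -⟩ := h_arg.exists_boundedContinuous_eLpNorm_sub_le hp hε
  refine ⟨fun x => exp (θ x * I), by fun_prop, fun x => norm_exp_ofReal_mul_I _, ?_⟩
  have h_polar : f =ᵐ[μ] fun x => exp (arg (f x) * I) := by
    filter_upwards [hf1] with x hx
    simpa [hx] using (norm_mul_exp_arg_mul_I (f x)).symm
  calc eLpNorm ((fun x => exp (θ x * I)) - f) p μ
      = eLpNorm (fun x => exp (θ x * I) - exp (arg (f x) * I)) p μ :=
        eLpNorm_congr_ae <| h_polar.mono fun x hx => congrArg (exp (θ x * I) - ·) hx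
    _ ≤ eLpNorm ((fun x => arg (f x)) - ⇑θ) p μ := eLpNorm_mono fun x => by
        simpa [abs_sub_comm] using norm_exp_ofReal_mul_I_sub_exp_le (θ x) (arg (f x))
    _ ≤ ε := hθ

theorem IsKroneckerSet.exists_ge_eLpNorm_xi_sub_le {K : Set ℝ} (hK : IsKroneckerSet K)
    {σ : Measure ℝ} [IsFiniteMeasure σ] (hconc : σ Kᶜ = 0) {p : ℝ≥0∞} (hp1 : 1 ≤ p)
    (hp : p ≠ ∞) {f : ℝ → ℂ} (hf : AEStronglyMeasurable f σ) (hf1 : ∀ᵐ x ∂σ, ‖f x‖ = 1)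
    {ε : ℝ≥0∞} (hε : 0 < ε) (M : ℝ) :
    ∃ t, M ≤ t ∧ eLpNorm (fun x => xi t x - f x) p σ ≤ ε := by
  obtain ⟨φ, hφc, hφ1, hφf⟩ :=
    exists_continuous_unimodular_eLpNorm_sub_le hp hf hf1 (ENNReal.half_pos hε.ne').ne'
  obtain ⟨δ, hδ, hδε⟩ := ENNReal.exists_nnreal_pos_mul_lt
    (ENNReal.rpow_ne_top_of_nonneg (inv_nonneg.2 ENNReal.toReal_nonneg) (measure_ne_top σ .univ))
    (ENNReal.half_pos hε.ne').ne'
  obtain ⟨t, hMt, ht⟩ := hK.exists_ge_forall_norm_sub_xi_lt hφc.continuousOn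
    (fun x _ => hφ1 x) (NNReal.coe_pos.2 hδ) M
  refine ⟨t, hMt, ?_⟩
  have h_unif : eLpNorm (fun x => xi t x - φ x) p σ ≤ ε / 2 := by
    have h_ae : ∀ᵐ x ∂σ, ‖xi t x - φ x‖ ≤ δ :=
      Eventually.mono (mem_ae_iff.2 hconc) fun x hx => by rw [norm_sub_rev]; exact (ht x hx).le
    calc eLpNorm (fun x => xi t x - φ x) p σ ≤ σ .univ ^ p.toReal⁻¹ * ENNReal.ofReal δ :=
          eLpNorm_le_of_ae_bound h_ae
      _ = δ * σ .univ ^ p.toReal⁻¹ := by rw [ENNReal.ofReal_coe_nnreal, mul_comm]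
      _ ≤ ε / 2 := hδε.le
  calc eLpNorm (fun x => xi t x - f x) p σ
      = eLpNorm ((fun x => xi t x - φ x) + (φ - f)) p σ := by congr 1; ext x; simp
    _ ≤ eLpNorm (fun x => xi t x - φ x) p σ + eLpNorm (φ - f) p σ :=
        eLpNorm_add_le ((continuous_xi t).sub hφc).aestronglyMeasurable
          (hφc.aestronglyMeasurable.sub hf) hp1
    _ ≤ ε / 2 + ε / 2 := add_le_add h_unif hφf
    _ = ε := ENNReal.add_halves ε

theorem statement19 (K : Set ℝ) (hK : IsKroneckerSet K)
    (σ : Measure ℝ) [IsFiniteMeasure σ] (hconc : σ Kᶜ = 0) :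
    ∀ f : ℝ → ℂ, MemLp f 2 σ → (∀ᵐ x ∂σ, ‖f x‖ = 1) →
      ∃ t : ℕ → ℝ, Tendsto t atTop atTop ∧
        Tendsto (fun n => eLpNorm (fun x => xi (t n) x - f x) 2 σ) atTop (𝓝 0) := by
  intro f hf hf1
  let l := atTop ⊓ comap (fun t => eLpNorm (fun x => xi t x - f x) 2 σ) (𝓝 0)
  have : l.NeBot := by
    refine (atTop_basis.inf_basis_neBot_iff (ENNReal.nhds_zero_basis_Iic.comap _)).2
      fun M _ ε hε => ?_
    exact hK.exists_ge_eLpNorm_xi_sub_le hconc one_le_two ENNReal.ofNat_ne_top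
      hf.aestronglyMeasurable hf1 hε M
  obtain ⟨t, ht⟩ := exists_seq_tendsto l
  rw [tendsto_inf, tendsto_comap_iff] at ht
  exact ⟨t, ht⟩
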